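/- arXiv:1610.03025 — 4 statements merged into one kernel-verified Lean document; each statement's English description precedes it below -/
import Mathlib

section
/- Let α ∈ (0,1), n ∈ ℕ, and z ∈ ℂ with Re(z) ≤ 0 and z ≠ 0. Then every complex root ξ₀ of the stability polynomial π(ξ; z) = (1 − z) ξ^{n+1} − Σ_{k=0}^{n} c^{n+1}_k ξ^k satisfies |ξ₀| < 1. -/
/-
Since `c^{n+1}_k ≥ 0` and `Σ_k c^{n+1}_k = 1`, a root `ξ₀` with `|ξ₀| ≥ 1` would satisfy
`|1 - z| |ξ₀|^{n+1} = |Σ_k c^{n+1}_k ξ₀^k| ≤ |ξ₀|^n ≤ |ξ₀|^{n+1}`, forcing `|1 - z| ≤ 1`.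
But `Re z ≤ 0` and `z ≠ 0` give `|1 - z|² = 1 - 2 Re z + |z|² > 1`.
-/

open scoped BigOperators

/-- The L1 coefficients `c^{n+1}_k` for the discrete Caputo derivative:
`c^{n+1}_0 = (n+1)^{1-α} - n^{1-α}` and, for `1 ≤ k ≤ n`,
`c^{n+1}_k = 2(n+1-k)^{1-α} - (n+2-k)^{1-α} - (n-k)^{1-α}`. -/
noncomputable def caputoCoeff (α : ℝ) (n k : ℕ) : ℝ :=
  if k = 0 then ((n : ℝ) + 1) ^ (1 - α) - (n : ℝ) ^ (1 - α)
  else 2 * ((n : ℝ) + 1 - (k : ℝ)) ^ (1 - α) - ((n : ℝ) + 2 - (k : ℝ)) ^ (1 - α)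
    - ((n : ℝ) - (k : ℝ)) ^ (1 - α)

/-- Nonnegativity of `c^{n+1}_k` for `k ≥ 1` is the midpoint concavity of `t ↦ t^{1-α}`. -/
lemma caputoCoeff_nonneg {α : ℝ} (hα₀ : 0 ≤ α) (hα₁ : α ≤ 1) {n k : ℕ} (hk : k ≤ n) :
    0 ≤ caputoCoeff α n k := by
  have hs₀ : 0 ≤ 1 - α := by linarith
  have hs₁ : 1 - α ≤ 1 := by linarith
  have hkn : (k : ℝ) ≤ n := by exact_mod_cast hk
  rcases Nat.eq_zero_or_pos k with rfl | hk₀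
  · simp only [caputoCoeff, if_true, sub_nonneg]
    exact Real.rpow_le_rpow n.cast_nonneg (by linarith) hs₀
  · have hmid := (Real.concaveOn_rpow hs₀ hs₁).2 (x := (n : ℝ) - k) (y := (n : ℝ) + 2 - k)
      (by simpa using hkn) (by simp only [Set.mem_Ici]; linarith)
      (by norm_num : (0 : ℝ) ≤ 1 / 2) (by norm_num : (0 : ℝ) ≤ 1 / 2) (by norm_num)
    rw [smul_eq_mul, smul_eq_mul, smul_eq_mul, smul_eq_mul,
      show (1 / 2 : ℝ) * (n - k) + 1 / 2 * (n + 2 - k) = n + 1 - k by ring] at hmid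
    simp only [caputoCoeff, if_neg hk₀.ne']
    linarith

lemma sum_range_caputoCoeff {α : ℝ} (hα : α < 1) (n : ℕ) :
    ∑ k ∈ Finset.range (n + 1), caputoCoeff α n k = 1 := by
  set d : ℕ → ℝ := fun k => ((n : ℝ) + 1 - k) ^ (1 - α) - ((n : ℝ) - k) ^ (1 - α) with hd
  have hsucc (k : ℕ) : caputoCoeff α n (k + 1) = d (k + 1) - d k := by
    rw [caputoCoeff, if_neg k.succ_ne_zero]
    simp only [hd, Nat.cast_succ]
    rw [show (n : ℝ) + 1 - (k + 1) = n - k by ring, show (n : ℝ) + 2 - (k + 1) = n + 1 - k by ring]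
    ring
  have hzero : caputoCoeff α n 0 = d 0 := by simp [caputoCoeff, hd]
  have hlast : d n = 1 := by
    simp [hd, Real.zero_rpow (by linarith : (1 : ℝ) - α ≠ 0)]
  rw [Finset.sum_range_succ', Finset.sum_congr rfl fun k _ => hsucc k, Finset.sum_range_sub,
    hzero, hlast]
  ring

lemma Complex.one_lt_norm_one_sub {z : ℂ} (hre : z.re ≤ 0) (hz : z ≠ 0) : 1 < ‖1 - z‖ := by
  have hpos : 0 < z.re * z.re + z.im * z.im := by
    simpa [Complex.normSq_apply] using Complex.normSq_pos.mpr hz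
  have hsq : 1 < ‖1 - z‖ ^ 2 := by
    rw [Complex.sq_norm, Complex.normSq_apply]
    simp only [Complex.sub_re, Complex.sub_im, Complex.one_re, Complex.one_im]
    nlinarith
  nlinarith [norm_nonneg (1 - z)]

lemma Complex.norm_sum_mul_pow_le {n : ℕ} {c : ℕ → ℝ} (hc : ∀ k ≤ n, 0 ≤ c k)
    (hsum : ∑ k ∈ Finset.range (n + 1), c k = 1) {ξ : ℂ} (hξ : 1 ≤ ‖ξ‖) :
    ‖∑ k ∈ Finset.range (n + 1), (c k : ℂ) * ξ ^ k‖ ≤ ‖ξ‖ ^ n :=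
  calc ‖∑ k ∈ Finset.range (n + 1), (c k : ℂ) * ξ ^ k‖
      ≤ ∑ k ∈ Finset.range (n + 1), ‖(c k : ℂ) * ξ ^ k‖ := norm_sum_le _ _
    _ ≤ ∑ k ∈ Finset.range (n + 1), c k * ‖ξ‖ ^ n := by
        refine Finset.sum_le_sum fun k hk => ?_
        have hkn : k ≤ n := Nat.lt_succ_iff.mp (Finset.mem_range.mp hk)
        rw [norm_mul, norm_pow, Complex.norm_real, Real.norm_of_nonneg (hc k hkn)]
        exact mul_le_mul_of_nonneg_left (pow_le_pow_right₀ hξ hkn) (hc k hkn)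
    _ = ‖ξ‖ ^ n := by rw [← Finset.sum_mul, hsum, one_mul]

/-- if `Re z ≤ 0`, `z ≠ 0`, then every root of the stability polynomial
`π(ξ; z) = (1 - z) ξ^{n+1} - Σ_{k=0}^n c^{n+1}_k ξ^k` has modulus `< 1`. -/
theorem stability_root_abs_lt_one (α : ℝ) (hα : α ∈ Set.Ioo (0 : ℝ) 1) (n : ℕ)
    (z : ℂ) (hre : z.re ≤ 0) (hz : z ≠ 0) (ξ₀ : ℂ)
    (hroot : (1 - z) * ξ₀ ^ (n + 1)
      - ∑ k ∈ Finset.range (n + 1), (caputoCoeff α n k : ℂ) * ξ₀ ^ k = 0) :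
    ‖ξ₀‖ < 1 := by
  by_contra! hξ
  have hbound : ‖1 - z‖ * ‖ξ₀‖ ^ (n + 1) ≤ ‖ξ₀‖ ^ n := by
    rw [← norm_pow, ← norm_mul, sub_eq_zero.mp hroot]
    exact Complex.norm_sum_mul_pow_le (fun k hk => caputoCoeff_nonneg hα.1.le hα.2.le hk)
      (sum_range_caputoCoeff hα.2 n) hξ
  have hpow : ‖ξ₀‖ ^ n ≤ ‖ξ₀‖ ^ (n + 1) := pow_le_pow_right₀ hξ n.le_succ
  have hpos : 0 < ‖ξ₀‖ ^ (n + 1) := pow_pos (by linarith) _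
  have hgrow := mul_lt_mul_of_pos_right (Complex.one_lt_norm_one_sub hre hz) hpos
  linarith
end

section
/- Let α ∈ (0,1) and n ∈ ℕ with n ≥ 1. Then ξ = 1 is a root of π(ξ; 0) = ξ^{n+1} − Σ_{k=0}^{n} c^{n+1}_k ξ^k, and its derivative at ξ = 1 satisfies (n+1) − Σ_{k=0}^{n} k · c^{n+1}_k > 1; in particular ξ = 1 is a simple root. -/
/- Writing `d_k = (n+1-k)^{1-α} - (n-k)^{1-α}`, the coefficients are backward differences:
`c_0 = d_0` and `c_k = d_k - d_{k-1}`. Hence `∑ c_k = d_n = 1` and, by summation by parts,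
`∑ k c_k = n d_n - ∑_{k<n} d_k = (n+1) - (n+1)^{1-α}`, since the `d_k` telescope as well.
So the derivative of `π(·; 0)` at `1` equals `(n+1)^{1-α}`, which exceeds `1` once `n ≥ 1`. -/

open scoped BigOperators

open Finset

theorem sum_range_succ_of_backward_diff {M : Type*} [AddCommGroup M] {c d : ℕ → M}
    (h0 : c 0 = d 0) (hsucc : ∀ k, c (k + 1) = d (k + 1) - d k) (n : ℕ) :
    ∑ k ∈ range (n + 1), c k = d n := by
  induction n with
  | zero => simp [h0]
  | succ n ih => rw [sum_range_succ, ih, hsucc]; abel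

theorem sum_range_succ_mul_of_backward_diff {R : Type*} [CommRing R] {c d : ℕ → R}
    (hsucc : ∀ k, c (k + 1) = d (k + 1) - d k) (n : ℕ) :
    ∑ k ∈ range (n + 1), (k : R) * c k = n * d n - ∑ k ∈ range n, d k := by
  induction n with
  | zero => simp
  | succ n ih => rw [sum_range_succ, ih, hsucc, sum_range_succ]; push_cast; ring

section CaputoCoeff

variable (α : ℝ) (n : ℕ)

noncomputable def caputoDiff (k : ℕ) : ℝ :=
  ((n : ℝ) + 1 - k) ^ (1 - α) - ((n : ℝ) - k) ^ (1 - α)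

theorem caputoCoeff_zero : caputoCoeff α n 0 = caputoDiff α n 0 := by
  simp [caputoCoeff, caputoDiff]

theorem caputoCoeff_succ (k : ℕ) :
    caputoCoeff α n (k + 1) = caputoDiff α n (k + 1) - caputoDiff α n k := by
  simp only [caputoCoeff, caputoDiff, Nat.succ_ne_zero, if_false]
  push_cast
  ring_nf

variable {α}

theorem caputoDiff_self (hα : α ≠ 1) : caputoDiff α n n = 1 := by
  simp [caputoDiff, Real.zero_rpow (sub_ne_zero.mpr hα.symm)]

theorem sum_caputoDiff : ∑ k ∈ range n, caputoDiff α n k = ((n : ℝ) + 1) ^ (1 - α) - 1 := by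
  have htelescope : ∀ k : ℕ, caputoDiff α n k
      = ((n : ℝ) + 1 - k) ^ (1 - α) - ((n : ℝ) + 1 - (k + 1 : ℕ)) ^ (1 - α) := by
    intro k
    simp only [caputoDiff]
    push_cast
    ring_nf
  rw [sum_congr rfl fun k _ => htelescope k,
    sum_range_sub' (fun k : ℕ => ((n : ℝ) + 1 - k) ^ (1 - α))]
  simp

theorem sum_caputoCoeff (hα : α ≠ 1) : ∑ k ∈ range (n + 1), caputoCoeff α n k = 1 := by
  rw [sum_range_succ_of_backward_diff (caputoCoeff_zero α n) (caputoCoeff_succ α n),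
    caputoDiff_self n hα]

theorem sum_mul_caputoCoeff (hα : α ≠ 1) :
    ∑ k ∈ range (n + 1), (k : ℝ) * caputoCoeff α n k = (n : ℝ) + 1 - ((n : ℝ) + 1) ^ (1 - α) := by
  rw [sum_range_succ_mul_of_backward_diff (caputoCoeff_succ α n), caputoDiff_self n hα,
    sum_caputoDiff]
  ring

end CaputoCoeff

/-- `ξ = 1` is a root of `π(ξ;0) = ξ^{n+1} - Σ_{k=0}^n c^{n+1}_k ξ^k`,
and the derivative at `ξ = 1`, namely `(n+1) - Σ_{k=0}^n k c^{n+1}_k`, is `> 1`;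
in particular `ξ = 1` is a simple root. -/
theorem one_is_simple_root (α : ℝ) (hα : α ∈ Set.Ioo (0 : ℝ) 1) (n : ℕ) (hn : 1 ≤ n) :
    ((1 : ℂ) ^ (n + 1)
        - ∑ k ∈ Finset.range (n + 1), (caputoCoeff α n k : ℂ) * (1 : ℂ) ^ k = 0) ∧
    ((n : ℝ) + 1) - ∑ k ∈ Finset.range (n + 1), (k : ℝ) * caputoCoeff α n k > 1 := by
  have hα1 : α ≠ 1 := hα.2.ne
  constructor
  · simp only [one_pow, mul_one]
    rw [← Complex.ofReal_sum, sum_caputoCoeff n hα1]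
    simp
  · rw [sum_mul_caputoCoeff n hα1, sub_sub_cancel, gt_iff_lt]
    have hn1 : (1 : ℝ) < n + 1 := by
      have : (1 : ℝ) ≤ n := by exact_mod_cast hn
      linarith
    exact Real.one_lt_rpow hn1 (by linarith [hα.2])
end

section
/- Let α ∈ (0,1). There exists a constant C > 0 (depending only on α) such that for every τ > 0, every integer n ≥ 1, and every twice continuously differentiable function u : [0, nτ] → ℝ, letting t^k = kτ and M = max_{t ∈ [0, nτ]} |u''(t)|, one has | (1/Γ(1−α)) ∫_0^{t^n} (t^n − s)^{−α} u'(s) ds − (1/(Γ(2−α) τ^α)) ( u(t^n) − Σ_{k=0}^{n−1} c^{n}_k u(t^k) ) | ≤ C · M · τ^{2−α}. -/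
/-!
Split `[0, t^n]` into the cells `[t^k, t^{k+1}]` and replace `u'` on each cell by the difference
quotient of `u`. Integrating the kernel `(t^n - s)^{-α}` exactly over the cells reproduces the L1
scheme; the coefficients `c^n_k` are what Abel summation makes of the cell weights. On the last
cell `|u' - slope| ≤ Mτ` against a kernel of mass `τ^{1-α}/(1-α)`. On every other cell,
integration by parts moves the derivative onto the increasing kernel and onto the linear
interpolation error, which vanishes at both ends and is at most `Mτ²`; these bounds telescope to
`Mτ² · τ^{-α}`.
-/

open scoped BigOperators

open MeasureTheory intervalIntegral Set Finset

lemma sum_range_sub_mul_sub {R : Type*} [CommRing R] (g v : ℕ → R) (n : ℕ) :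
    ∑ k ∈ range (n + 1), (g k - g (k + 1)) * (v (k + 1) - v k)
      = (g n - g (n + 1)) * v (n + 1) - (g 0 - g 1) * v 0
        - ∑ k ∈ range n, (2 * g (k + 1) - g k - g (k + 2)) * v (k + 1) := by
  induction n with
  | zero => simp only [zero_add, range_zero, sum_range_one, sum_empty]; ring
  | succ n ih => rw [sum_range_succ, ih, sum_range_succ]; ring

lemma sub_sum_caputoCoeff_mul {α : ℝ} (hα : α ≠ 1) (m : ℕ) (v : ℕ → ℝ) :
    v (m + 1) - ∑ k ∈ range (m + 1), caputoCoeff α m k * v k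
      = ∑ k ∈ range (m + 1),
          (((m : ℝ) + 1 - k) ^ (1 - α) - ((m : ℝ) - k) ^ (1 - α)) * (v (k + 1) - v k) := by
  set g : ℕ → ℝ := fun k => ((m : ℝ) + 1 - k) ^ (1 - α) with hg
  have hshift : ∀ k : ℕ, ((m : ℝ) - k) ^ (1 - α) = g (k + 1) := fun k => by
    simp only [hg]; push_cast; ring_nf
  have hc0 : caputoCoeff α m 0 = g 0 - g 1 := by
    simp only [caputoCoeff, if_pos, hg]; push_cast; ring_nf
  have hc : ∀ k : ℕ, caputoCoeff α m (k + 1) = 2 * g (k + 1) - g k - g (k + 2) := fun k => by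
    simp only [caputoCoeff, if_neg k.succ_ne_zero, hg]; push_cast; ring_nf
  have hgm : g m = 1 := by simp [hg]
  have hgm1 : g (m + 1) = 0 := by
    simp [hg, Real.zero_rpow (sub_ne_zero.mpr hα.symm)]
  simp only [hshift]
  rw [sum_range_sub_mul_sub g v m, sum_range_succ', hgm, hgm1, hc0]
  simp only [hc]
  ring

lemma abs_integral_mul_deriv_le {k k' e e' : ℝ → ℝ} {a b K : ℝ} (hab : a ≤ b)
    (hk : ∀ x ∈ Icc a b, HasDerivAt k (k' x) x) (he : ∀ x ∈ Icc a b, HasDerivAt e (e' x) x)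
    (hk' : IntervalIntegrable k' volume a b) (he' : IntervalIntegrable e' volume a b)
    (hk'_nonneg : ∀ x ∈ Icc a b, 0 ≤ k' x) (hea : e a = 0) (heb : e b = 0)
    (heK : ∀ x ∈ Icc a b, |e x| ≤ K) :
    |∫ x in a..b, k x * e' x| ≤ K * (k b - k a) := by
  rw [← uIcc_of_le hab] at hk he
  rw [integral_mul_deriv_eq_deriv_mul hk he hk' he', hea, heb, mul_zero, mul_zero, sub_zero,
    zero_sub, abs_neg]
  have hbound : ∀ᵐ x ∂volume, x ∈ Ioc a b → ‖k' x * e x‖ ≤ K * k' x :=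
    ae_of_all _ fun x hx => by
      have hx' := Ioc_subset_Icc_self hx
      rw [Real.norm_eq_abs, abs_mul, abs_of_nonneg (hk'_nonneg x hx'), mul_comm K]
      exact mul_le_mul_of_nonneg_left (heK x hx') (hk'_nonneg x hx')
  calc |∫ x in a..b, k' x * e x|
      ≤ ∫ x in a..b, K * k' x := norm_integral_le_of_norm_le hab hbound (hk'.const_mul K)
    _ = K * (k b - k a) := by
      rw [intervalIntegral.integral_const_mul, integral_eq_sub_of_hasDerivAt hk hk']

section Cell

variable {u : ℝ → ℝ} {a b M : ℝ}

lemma abs_deriv_sub_slope_le (hu : Differentiable ℝ u) (hu' : Differentiable ℝ (deriv u))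
    (hab : a < b) (hM : ∀ x ∈ Icc a b, |deriv (deriv u) x| ≤ M) {s : ℝ} (hs : s ∈ Icc a b) :
    |deriv u s - slope u a b| ≤ M * (b - a) := by
  obtain ⟨ξ, hξ, hξ_eq⟩ := exists_deriv_eq_slope u hab hu.continuous.continuousOn
    hu.differentiableOn
  rw [slope_def_field, ← hξ_eq]
  have hLip := (convex_Icc a b).norm_image_sub_le_of_norm_deriv_le (fun x _ => hu' x) hM
    (Ioo_subset_Icc_self hξ) hs
  simp only [Real.norm_eq_abs] at hLip
  have hM0 : 0 ≤ M := (abs_nonneg _).trans (hM s hs)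
  have hsξ : |s - ξ| ≤ b - a :=
    abs_sub_le_iff.mpr ⟨by linarith [hs.2, hξ.1], by linarith [hs.1, hξ.2]⟩
  exact hLip.trans (mul_le_mul_of_nonneg_left hsξ hM0)

lemma abs_sub_sub_slope_mul_le (hu : Differentiable ℝ u) (hu' : Differentiable ℝ (deriv u))
    (hab : a < b) (hM : ∀ x ∈ Icc a b, |deriv (deriv u) x| ≤ M) {s : ℝ} (hs : s ∈ Icc a b) :
    |u s - u a - slope u a b * (s - a)| ≤ M * (b - a) ^ 2 := by
  have hderiv : ∀ x ∈ Icc a b, HasDerivWithinAt (fun s => u s - slope u a b * s)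
      (deriv u x - slope u a b) (Icc a b) x := fun x _ =>
    ((hu x).hasDerivAt.sub ((hasDerivAt_id x).const_mul _)).hasDerivWithinAt.congr_deriv
      (by simp)
  have h := norm_image_sub_le_of_norm_deriv_le_segment' hderiv
    (fun x hx => abs_deriv_sub_slope_le hu hu' hab hM (Ico_subset_Icc_self hx)) s hs
  rw [Real.norm_eq_abs] at h
  have hM0 : 0 ≤ M * (b - a) := (abs_nonneg _).trans (abs_deriv_sub_slope_le hu hu' hab hM hs)
  calc |u s - u a - slope u a b * (s - a)|
      = |u s - slope u a b * s - (u a - slope u a b * a)| := by ring_nf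
    _ ≤ M * (b - a) * (s - a) := h
    _ ≤ M * (b - a) ^ 2 := by nlinarith [hs.1, hs.2]

end Cell

section Kernel

variable {α : ℝ}

lemma intervalIntegrable_sub_rpow_neg (hα : α < 1) (T a b : ℝ) :
    IntervalIntegrable (fun s => (T - s) ^ (-α)) volume a b := by
  simpa using ((intervalIntegrable_rpow' (a := T - b) (b := T - a)
    (by linarith : (-1 : ℝ) < -α)).comp_sub_left T).symm

lemma integral_sub_rpow_neg (hα : α < 1) (T a b : ℝ) :
    ∫ s in a..b, (T - s) ^ (-α) = ((T - a) ^ (1 - α) - (T - b) ^ (1 - α)) / (1 - α) := by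
  rw [integral_comp_sub_left (fun x => x ^ (-α)) T, integral_rpow (Or.inl (by linarith)),
    show -α + 1 = 1 - α by ring]

end Kernel

noncomputable def l1CellError (α T : ℝ) (u : ℝ → ℝ) (a b : ℝ) : ℝ :=
  ∫ s in a..b, (T - s) ^ (-α) * (deriv u s - slope u a b)

section CellError

variable {α T a b M : ℝ} {u : ℝ → ℝ}

lemma integral_mul_deriv_eq_slope_mul_add_l1CellError (hα : α < 1)
    (hu' : Continuous (deriv u)) (T a b : ℝ) :
    ∫ s in a..b, (T - s) ^ (-α) * deriv u s
      = slope u a b * (∫ s in a..b, (T - s) ^ (-α)) + l1CellError α T u a b := by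
  have hker := intervalIntegrable_sub_rpow_neg hα T a b
  rw [l1CellError]
  simp_rw [mul_sub]
  rw [integral_sub (hker.mul_continuousOn hu'.continuousOn) (hker.mul_const _),
    intervalIntegral.integral_mul_const]
  ring

lemma abs_l1CellError_le (hα : 0 ≤ α) (hu : Differentiable ℝ u)
    (hu' : Differentiable ℝ (deriv u)) (hab : a < b) (hbT : b < T)
    (hM : ∀ x ∈ Icc a b, |deriv (deriv u) x| ≤ M) :
    |l1CellError α T u a b| ≤ M * (b - a) ^ 2 * ((T - b) ^ (-α) - (T - a) ^ (-α)) := by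
  have hpos : ∀ x ∈ Icc a b, 0 < T - x := fun x hx => by linarith [hx.2]
  have hker : ∀ x ∈ Icc a b,
      HasDerivAt (fun s => (T - s) ^ (-α)) (α * (T - x) ^ (-α - 1)) x := fun x hx =>
    (((hasDerivAt_id' x).const_sub T).rpow_const (p := -α)
      (Or.inl (hpos x hx).ne')).congr_deriv (by ring)
  have hker_cont : ContinuousOn (fun x => α * (T - x) ^ (-α - 1)) (uIcc a b) := by
    rw [uIcc_of_le hab.le]
    exact continuousOn_const.mul <| (continuous_const.sub continuous_id).continuousOn.rpow_const
      fun x hx => Or.inl (hpos x hx).ne'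
  have hinterp : ∀ x ∈ Icc a b, HasDerivAt (fun s => u s - u a - slope u a b * (s - a))
      (deriv u x - slope u a b) x := fun x _ =>
    (((hu x).hasDerivAt.sub_const (u a)).sub
      (((hasDerivAt_id x).sub_const a).const_mul (slope u a b))).congr_deriv (by ring)
  have hinterp_b : u b - u a - slope u a b * (b - a) = 0 := by
    rw [slope_def_field, div_mul_cancel₀ _ (sub_ne_zero.mpr hab.ne'), sub_self]
  exact abs_integral_mul_deriv_le hab.le hker hinterp hker_cont.intervalIntegrable
    ((hu'.continuous.sub continuous_const).intervalIntegrable a b)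
    (fun x hx => mul_nonneg hα (Real.rpow_nonneg (hpos x hx).le _)) (by simp) hinterp_b
    (fun x hx => abs_sub_sub_slope_mul_le hu hu' hab hM hx)

lemma abs_l1CellError_self_le (hα : α < 1) (hu : Differentiable ℝ u)
    (hu' : Differentiable ℝ (deriv u)) (hab : a < b)
    (hM : ∀ x ∈ Icc a b, |deriv (deriv u) x| ≤ M) :
    |l1CellError α b u a b| ≤ M * (b - a) ^ (2 - α) / (1 - α) := by
  have hbound : ∀ᵐ s ∂volume, s ∈ Ioc a b →
      ‖(b - s) ^ (-α) * (deriv u s - slope u a b)‖ ≤ M * (b - a) * (b - s) ^ (-α) :=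
    ae_of_all _ fun s hs => by
      have hs' := Ioc_subset_Icc_self hs
      have hker : 0 ≤ (b - s) ^ (-α) := Real.rpow_nonneg (by linarith [hs'.2]) _
      rw [Real.norm_eq_abs, abs_mul, abs_of_nonneg hker, mul_comm]
      exact mul_le_mul_of_nonneg_right (abs_deriv_sub_slope_le hu hu' hab hM hs') hker
  calc |l1CellError α b u a b|
      ≤ ∫ s in a..b, M * (b - a) * (b - s) ^ (-α) :=
        norm_integral_le_of_norm_le hab.le hbound
          ((intervalIntegrable_sub_rpow_neg hα b a b).const_mul _)
    _ = M * (b - a) ^ (2 - α) / (1 - α) := by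
      rw [intervalIntegral.integral_const_mul, integral_sub_rpow_neg hα, sub_self,
        Real.zero_rpow (by linarith), sub_zero, show (2 : ℝ) - α = 1 + (1 - α) by ring,
        Real.rpow_one_add' (by linarith) (by linarith)]
      ring

end CellError

section Grid

variable {α τ M : ℝ} {u : ℝ → ℝ}

lemma integral_grid_sub_rpow_neg (hα : α < 1) (hτ : 0 ≤ τ) {m k : ℕ} (hk : k ≤ m) :
    ∫ s in (k : ℝ) * τ..((k + 1 : ℕ) : ℝ) * τ, (((m + 1 : ℕ) : ℝ) * τ - s) ^ (-α)
      = τ ^ (1 - α) * (((m : ℝ) + 1 - k) ^ (1 - α) - ((m : ℝ) - k) ^ (1 - α)) / (1 - α) := by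
  have hk' : (k : ℝ) ≤ m := by exact_mod_cast hk
  rw [integral_sub_rpow_neg hα,
    show ((m + 1 : ℕ) : ℝ) * τ - k * τ = (m + 1 - k) * τ by push_cast; ring,
    show ((m + 1 : ℕ) : ℝ) * τ - ((k + 1 : ℕ) : ℝ) * τ = (m - k) * τ by push_cast; ring,
    Real.mul_rpow (by linarith) hτ, Real.mul_rpow (by linarith) hτ]
  ring

lemma l1_eq_sum_slope_mul_integral (hα : α < 1) (hτ : 0 < τ) (m : ℕ) (u : ℝ → ℝ) :
    1 / (Real.Gamma (2 - α) * τ ^ α)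
        * (u (((m + 1 : ℕ) : ℝ) * τ)
          - ∑ k ∈ range (m + 1), caputoCoeff α m k * u ((k : ℝ) * τ))
      = 1 / Real.Gamma (1 - α) * ∑ k ∈ range (m + 1),
          slope u ((k : ℝ) * τ) (((k + 1 : ℕ) : ℝ) * τ)
            * ∫ s in (k : ℝ) * τ..((k + 1 : ℕ) : ℝ) * τ,
                (((m + 1 : ℕ) : ℝ) * τ - s) ^ (-α) := by
  have h1α : 0 < 1 - α := by linarith
  have hΓ : Real.Gamma (2 - α) = (1 - α) * Real.Gamma (1 - α) := by
    rw [show 2 - α = (1 - α) + 1 by ring, Real.Gamma_add_one h1α.ne']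
  have hΓ_ne : Real.Gamma (1 - α) ≠ 0 := (Real.Gamma_pos_of_pos h1α).ne'
  rw [sub_sum_caputoCoeff_mul hα.ne m fun k => u ((k : ℝ) * τ), mul_sum, mul_sum]
  refine sum_congr rfl fun k hk => ?_
  rw [integral_grid_sub_rpow_neg hα hτ.le (mem_range_succ_iff.mp hk), slope_def_field, hΓ,
    Real.rpow_sub hτ, Real.rpow_one]
  field_simp
  push_cast
  ring

lemma integral_eq_sum_slope_mul_integral_add_l1CellError (hα : α < 1)
    (hu' : Continuous (deriv u)) (T : ℝ) (n : ℕ) :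
    ∫ s in (0 : ℝ)..(n : ℝ) * τ, (T - s) ^ (-α) * deriv u s
      = ∑ k ∈ range n, (slope u ((k : ℝ) * τ) (((k + 1 : ℕ) : ℝ) * τ)
          * (∫ s in (k : ℝ) * τ..((k + 1 : ℕ) : ℝ) * τ, (T - s) ^ (-α))
          + l1CellError α T u ((k : ℝ) * τ) (((k + 1 : ℕ) : ℝ) * τ)) := by
  have hsplit := sum_integral_adjacent_intervals (a := fun k : ℕ => (k : ℝ) * τ) (n := n)
    (μ := volume) fun k _ =>
      (intervalIntegrable_sub_rpow_neg hα T _ _).mul_continuousOn hu'.continuousOn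
  rw [Nat.cast_zero, zero_mul] at hsplit
  rw [← hsplit]
  exact sum_congr rfl fun k _ => integral_mul_deriv_eq_slope_mul_add_l1CellError hα hu' T _ _

lemma caputo_sub_l1_eq_sum_l1CellError (hα : α < 1) (hτ : 0 < τ)
    (hu' : Continuous (deriv u)) (m : ℕ) :
    1 / Real.Gamma (1 - α)
        * (∫ s in (0 : ℝ)..((m + 1 : ℕ) : ℝ) * τ,
            (((m + 1 : ℕ) : ℝ) * τ - s) ^ (-α) * deriv u s)
      - 1 / (Real.Gamma (2 - α) * τ ^ α)
        * (u (((m + 1 : ℕ) : ℝ) * τ)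
          - ∑ k ∈ range (m + 1), caputoCoeff α m k * u ((k : ℝ) * τ))
      = 1 / Real.Gamma (1 - α) * ∑ k ∈ range (m + 1),
          l1CellError α (((m + 1 : ℕ) : ℝ) * τ) u ((k : ℝ) * τ) (((k + 1 : ℕ) : ℝ) * τ) := by
  rw [integral_eq_sum_slope_mul_integral_add_l1CellError hα hu',
    l1_eq_sum_slope_mul_integral hα hτ, ← mul_sub, ← sum_sub_distrib]
  simp only [add_sub_cancel_left]

lemma sum_abs_l1CellError_le (hα : 0 ≤ α) (hτ : 0 < τ) (hu : Differentiable ℝ u)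
    (hu' : Differentiable ℝ (deriv u)) (m : ℕ)
    (hM : ∀ x ∈ Icc 0 (((m + 1 : ℕ) : ℝ) * τ), |deriv (deriv u) x| ≤ M) :
    ∑ k ∈ range m,
        |l1CellError α (((m + 1 : ℕ) : ℝ) * τ) u ((k : ℝ) * τ) (((k + 1 : ℕ) : ℝ) * τ)|
      ≤ M * τ ^ (2 - α) := by
  set T := ((m + 1 : ℕ) : ℝ) * τ
  have hM0 : 0 ≤ M := (abs_nonneg _).trans (hM 0 ⟨le_rfl, by positivity⟩)
  have hcell : ∀ k ∈ range m,
      |l1CellError α T u ((k : ℝ) * τ) (((k + 1 : ℕ) : ℝ) * τ)|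
        ≤ M * τ ^ 2 * ((T - ((k + 1 : ℕ) : ℝ) * τ) ^ (-α) - (T - (k : ℝ) * τ) ^ (-α)) := by
    intro k hk
    have hab : (k : ℝ) * τ < ((k + 1 : ℕ) : ℝ) * τ :=
      mul_lt_mul_of_pos_right (by exact_mod_cast k.lt_succ_self) hτ
    have hbT : ((k + 1 : ℕ) : ℝ) * τ < T :=
      mul_lt_mul_of_pos_right (by exact_mod_cast Nat.succ_lt_succ (mem_range.mp hk)) hτ
    have hstep : ((k + 1 : ℕ) : ℝ) * τ - k * τ = τ := by push_cast; ring
    simpa only [hstep] using abs_l1CellError_le hα hu hu' hab hbT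
      fun x hx => hM x ⟨(mul_nonneg k.cast_nonneg hτ.le).trans hx.1, hx.2.trans hbT.le⟩
  calc ∑ k ∈ range m, |l1CellError α T u ((k : ℝ) * τ) (((k + 1 : ℕ) : ℝ) * τ)|
      ≤ M * τ ^ 2 * ((T - (m : ℝ) * τ) ^ (-α) - (T - ((0 : ℕ) : ℝ) * τ) ^ (-α)) := by
        rw [← sum_range_sub (fun k : ℕ => (T - (k : ℝ) * τ) ^ (-α)), mul_sum]
        exact sum_le_sum hcell
    _ ≤ M * τ ^ 2 * τ ^ (-α) := by
        have hTm : T - (m : ℝ) * τ = τ := by simp only [T]; push_cast; ring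
        rw [hTm]
        gcongr
        have hT0 : 0 ≤ T - ((0 : ℕ) : ℝ) * τ := by
          simp only [T, Nat.cast_zero, zero_mul, sub_zero]; positivity
        exact sub_le_self _ (Real.rpow_nonneg hT0 _)
    _ = M * τ ^ (2 - α) := by
        rw [sub_eq_add_neg, Real.rpow_add hτ, Real.rpow_two, mul_assoc]

lemma abs_sum_l1CellError_le (hα : α ∈ Set.Ioo 0 1) (hτ : 0 < τ) (hu : Differentiable ℝ u)
    (hu' : Differentiable ℝ (deriv u)) (m : ℕ)
    (hM : ∀ x ∈ Icc 0 (((m + 1 : ℕ) : ℝ) * τ), |deriv (deriv u) x| ≤ M) :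
    |∑ k ∈ range (m + 1),
        l1CellError α (((m + 1 : ℕ) : ℝ) * τ) u ((k : ℝ) * τ) (((k + 1 : ℕ) : ℝ) * τ)|
      ≤ (2 - α) / (1 - α) * M * τ ^ (2 - α) := by
  have hlast := abs_l1CellError_self_le hα.2 hu hu' (a := (m : ℝ) * τ)
    (by push_cast; linarith) fun x hx => hM x ⟨(by positivity : (0 : ℝ) ≤ m * τ).trans hx.1, hx.2⟩
  rw [show ((m + 1 : ℕ) : ℝ) * τ - m * τ = τ by push_cast; ring] at hlast
  have h1α : 0 < 1 - α := by linarith [hα.2]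
  calc _ ≤ ∑ k ∈ range m,
          |l1CellError α (((m + 1 : ℕ) : ℝ) * τ) u ((k : ℝ) * τ) (((k + 1 : ℕ) : ℝ) * τ)|
        + |l1CellError α (((m + 1 : ℕ) : ℝ) * τ) u ((m : ℝ) * τ) (((m + 1 : ℕ) : ℝ) * τ)| := by
        rw [sum_range_succ]
        exact (abs_add_le _ _).trans (add_le_add_left (abs_sum_le_sum_abs _ _) _)
    _ ≤ M * τ ^ (2 - α) + M * τ ^ (2 - α) / (1 - α) :=
        add_le_add (sum_abs_l1CellError_le hα.1.le hτ hu hu' m hM) hlast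
    _ = (2 - α) / (1 - α) * M * τ ^ (2 - α) := by field_simp; ring

end Grid

/-- consistency error of the L1 discretization of the Caputo derivative:
there is `C > 0` (depending only on `α`) such that for every `τ > 0`, `n ≥ 1` and every
twice continuously differentiable `u` with `|u''| ≤ M` on `[0, nτ]`,
`| ∂_t^α u(t^n) - D_t^α u(t^n) | ≤ C M τ^{2-α}`, where `t^k = kτ`, `c^n_k = caputoCoeff α (n-1) k`. -/
theorem caputo_L1_consistency (α : ℝ) (hα : α ∈ Set.Ioo (0 : ℝ) 1) :
    ∃ C : ℝ, 0 < C ∧ ∀ τ : ℝ, 0 < τ → ∀ n : ℕ, 1 ≤ n → ∀ u : ℝ → ℝ, ContDiff ℝ 2 u →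
      ∀ M : ℝ, (∀ t ∈ Set.Icc (0 : ℝ) ((n : ℝ) * τ), |deriv (deriv u) t| ≤ M) →
      |(1 / Real.Gamma (1 - α))
          * (∫ s in (0 : ℝ)..((n : ℝ) * τ), ((n : ℝ) * τ - s) ^ (-α) * deriv u s)
        - (1 / (Real.Gamma (2 - α) * τ ^ α))
          * (u ((n : ℝ) * τ)
              - ∑ k ∈ Finset.range n, caputoCoeff α (n - 1) k * u ((k : ℝ) * τ))|
        ≤ C * M * τ ^ (2 - α) := by
  have hΓ : 0 < Real.Gamma (1 - α) := Real.Gamma_pos_of_pos (by linarith [hα.2])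
  refine ⟨(2 - α) / (1 - α) / Real.Gamma (1 - α),
    div_pos (div_pos (by linarith [hα.2]) (by linarith [hα.2])) hΓ, ?_⟩
  intro τ hτ n hn u hu M hM
  obtain ⟨m, rfl⟩ : ∃ m, n = m + 1 := ⟨n - 1, by omega⟩
  have hud : Differentiable ℝ u := hu.differentiable (by norm_num)
  have hu'd : Differentiable ℝ (deriv u) := by
    simpa only [iteratedDeriv_one] using hu.differentiable_iteratedDeriv 1 (by norm_num)
  rw [Nat.add_sub_cancel, caputo_sub_l1_eq_sum_l1CellError hα.2 hτ hu'd.continuous, abs_mul,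
    abs_of_pos (one_div_pos.mpr hΓ)]
  calc 1 / Real.Gamma (1 - α) * |∑ k ∈ range (m + 1),
        l1CellError α (((m + 1 : ℕ) : ℝ) * τ) u ((k : ℝ) * τ) (((k + 1 : ℕ) : ℝ) * τ)|
      ≤ 1 / Real.Gamma (1 - α) * ((2 - α) / (1 - α) * M * τ ^ (2 - α)) :=
        mul_le_mul_of_nonneg_left (abs_sum_l1CellError_le hα hτ hud hu'd m hM)
          (one_div_pos.mpr hΓ).le
    _ = (2 - α) / (1 - α) / Real.Gamma (1 - α) * M * τ ^ (2 - α) := by ring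
end

section
/- Suppose (U^n) and (V^n) both solve the explicit upwind scheme (with the same f⁺, f⁻, δ) and the CFL condition holds with bounds L⁺, L⁻. Fix n ∈ ℕ and assume that for each 0 ≤ k ≤ n the sequence j ↦ |U^k_j − V^k_j| is summable over ℤ. Then j ↦ |U^{n+1}_j − V^{n+1}_j| is summable and Σ_{j∈ℤ} |U^{n+1}_j − V^{n+1}_j| ≤ Σ_{k=0}^{n} c^{n+1}_k Σ_{j∈ℤ} |U^k_j − V^k_j|. -/
open scoped BigOperators

/-- `U` solves the explicit upwind scheme with time steps indexed by `ℕ`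
and space indexed by `ℤ`. -/
def SolvesExplicitScheme (α δ : ℝ) (fp fm : ℝ → ℝ) (U : ℕ → ℤ → ℝ) : Prop :=
  ∀ (n : ℕ) (j : ℤ),
    U (n + 1) j = (∑ k ∈ Finset.range (n + 1), caputoCoeff α n k * U k j)
      - δ * (fp (U n j) - fp (U n (j - 1)))
      - δ * (fm (U n (j + 1)) - fm (U n j))

/-- The CFL condition with bounds `Lp, Lm`:
`(f⁺)' ≤ Lp`, `(f⁻)' ≥ -Lm` and `δ (Lp + Lm) ≤ 2 - 2^{1-α}`. -/
def CFLCondition (α δ Lp Lm : ℝ) (fp fm : ℝ → ℝ) : Prop :=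
  0 ≤ Lp ∧ 0 ≤ Lm ∧ (∀ x, deriv fp x ≤ Lp) ∧ (∀ x, -Lm ≤ deriv fm x) ∧
    δ * (Lp + Lm) ≤ 2 - (2 : ℝ) ^ (1 - α)

/-!
Subtracting the schemes for `U` and `V` and writing each flux increment through the mean value
theorem, `f^±(U^n_j) - f^±(V^n_j) = s^±_j (U^n_j - V^n_j)`, the error `e^{n+1}` becomes
`Σ_{k<n} c^{n+1}_k e^k` plus an upwind update of `e^n` whose three coefficients
`c^{n+1}_n - δ s⁺_j + δ s⁻_j`, `δ s⁺_{j-1}` and `-δ s⁻_{j+1}` are nonnegative: the first by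
the CFL condition together with `c^{n+1}_n ≥ 2 - 2^{1-α}`. A nonnegative upwind update is an
`ℓ¹` contraction up to the factor `c^{n+1}_n`, because summing over `j` the weights of each
`e^n_j` add up to exactly `c^{n+1}_n`. Since all `c^{n+1}_k` are nonnegative (concavity of
`x ↦ x^{1-α}`), the triangle inequality gives the estimate.
-/

lemma Real.rpow_add_two_add_rpow_le {β x : ℝ} (hβ₀ : 0 ≤ β) (hβ₁ : β ≤ 1) (hx : 0 ≤ x) :
    (x + 2) ^ β + x ^ β ≤ 2 * (x + 1) ^ β := by
  have := (Real.concaveOn_rpow hβ₀ hβ₁).2 (Set.mem_Ici.2 hx)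
    (Set.mem_Ici.2 (by linarith : 0 ≤ x + 2)) (by norm_num : (0 : ℝ) ≤ 1 / 2)
    (by norm_num : (0 : ℝ) ≤ 1 / 2) (by norm_num)
  simp only [smul_eq_mul, show 1 / 2 * x + 1 / 2 * (x + 2) = x + 1 by ring] at this
  linarith

lemma two_sub_two_rpow_le_caputoCoeff_self {α : ℝ} (hα : α < 1) (n : ℕ) :
    2 - (2 : ℝ) ^ (1 - α) ≤ caputoCoeff α n n := by
  have hβ : (1 : ℝ) - α ≠ 0 := by linarith
  rcases Nat.eq_zero_or_pos n with rfl | hn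
  · have : (1 : ℝ) ≤ 2 ^ (1 - α) := Real.one_le_rpow (by norm_num) (by linarith)
    simp only [caputoCoeff, ↓reduceIte, CharP.cast_eq_zero, zero_add, Real.one_rpow,
      Real.zero_rpow hβ, sub_zero]
    linarith
  · simp [caputoCoeff, hn.ne', Real.zero_rpow hβ]

lemma exists_mem_Icc_sub_eq_mul_sub {f : ℝ → ℝ} (hf : Differentiable ℝ f) {lo hi : ℝ}
    (hlo : ∀ x, lo ≤ deriv f x) (hhi : ∀ x, deriv f x ≤ hi) (u v : ℝ) :
    ∃ a ∈ Set.Icc lo hi, f u - f v = a * (u - v) := by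
  wlog huv : v ≤ u generalizing u v
  · obtain ⟨a, ha, h⟩ := this v u (le_of_not_ge huv)
    exact ⟨a, ha, by linear_combination -h⟩
  rcases huv.eq_or_lt with rfl | huv
  · exact ⟨deriv f 0, ⟨hlo 0, hhi 0⟩, by ring⟩
  obtain ⟨c, -, hc⟩ := exists_deriv_eq_slope f huv hf.continuous.continuousOn
    hf.differentiableOn
  exact ⟨deriv f c, ⟨hlo c, hhi c⟩, by rw [hc, div_mul_cancel₀ _ (sub_ne_zero.2 huv.ne')]⟩

def upwindStep (c : ℝ) (a b x : ℤ → ℝ) (j : ℤ) : ℝ :=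
  (c - a j + b j) * x j + a (j - 1) * x (j - 1) - b (j + 1) * x (j + 1)

lemma hasSum_add_comp_sub_one_add_comp_add_one {M : Type*} [AddCommMonoid M] [TopologicalSpace M]
    [ContinuousAdd M] {F G H : ℤ → M} {s t u : M} (hF : HasSum F s)
    (hG : HasSum G t) (hH : HasSum H u) :
    HasSum (fun j => F j + G (j - 1) + H (j + 1)) (s + t + u) :=
  (hF.add ((Equiv.subRight (1 : ℤ)).hasSum_iff.2 hG)).add
    ((Equiv.addRight (1 : ℤ)).hasSum_iff.2 hH)

lemma summable_abs_upwindStep_and_tsum_le {c : ℝ} {a b x : ℤ → ℝ} (ha : ∀ j, 0 ≤ a j)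
    (hb : ∀ j, b j ≤ 0) (hab : ∀ j, a j - b j ≤ c) (hx : Summable fun j => |x j|) :
    (Summable fun j => |upwindStep c a b x j|) ∧
      ∑' j, |upwindStep c a b x j| ≤ c * ∑' j, |x j| := by
  have hF : Summable fun j => (c - a j + b j) * |x j| :=
    (hx.mul_left c).of_nonneg_of_le (fun j => by nlinarith [abs_nonneg (x j), hab j])
      (fun j => by nlinarith [abs_nonneg (x j), ha j, hb j])
  have hG : Summable fun j => a j * |x j| :=
    (hx.mul_left c).of_nonneg_of_le (fun j => by nlinarith [abs_nonneg (x j), ha j])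
      (fun j => by nlinarith [abs_nonneg (x j), hab j, hb j])
  have hH : Summable fun j => -b j * |x j| :=
    (hx.mul_left c).of_nonneg_of_le (fun j => by nlinarith [abs_nonneg (x j), hb j])
      (fun j => by nlinarith [abs_nonneg (x j), hab j, ha j])
  -- each `|x j|` is counted with total weight `(c - a j + b j) + a j - b j = c`
  have hbound := hasSum_add_comp_sub_one_add_comp_add_one hF.hasSum hG.hasSum hH.hasSum
  have htotal : ∑' j, (c - a j + b j) * |x j| + ∑' j, a j * |x j| + ∑' j, -b j * |x j|
      = c * ∑' j, |x j| := by
    rw [← hF.tsum_add hG, ← (hF.add hG).tsum_add hH, ← tsum_mul_left]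
    exact tsum_congr fun j => by ring
  have hle : ∀ j, |upwindStep c a b x j| ≤
      (c - a j + b j) * |x j| + a (j - 1) * |x (j - 1)| + -b (j + 1) * |x (j + 1)| := by
    intro j
    have hcoeff : 0 ≤ c - a j + b j := by linarith [hab j]
    calc |upwindStep c a b x j|
        ≤ |(c - a j + b j) * x j| + |a (j - 1) * x (j - 1)| + |-b (j + 1) * x (j + 1)| := by
          unfold upwindStep
          rw [sub_eq_add_neg _ (b (j + 1) * _), ← neg_mul]
          exact (abs_add_le _ _).trans (by gcongr; exact abs_add_le _ _)
      _ = _ := by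
          rw [abs_mul, abs_mul, abs_mul, abs_of_nonneg hcoeff, abs_of_nonneg (ha _),
            abs_of_nonneg (neg_nonneg.2 (hb _))]
  have hsum : Summable fun j => |upwindStep c a b x j| :=
    hbound.summable.of_nonneg_of_le (fun j => abs_nonneg _) hle
  exact ⟨hsum, htotal ▸ hasSum_le hle hsum.hasSum hbound⟩

lemma summable_abs_sum_add_and_tsum_le {ι : Type*} {n : ℕ} {c : ℕ → ℝ} {x : ℕ → ι → ℝ}
    {g : ι → ℝ}
    (hc : ∀ k < n, 0 ≤ c k) (hx : ∀ k < n, Summable fun j => |x k j|)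
    (hg : Summable fun j => |g j|) :
    (Summable fun j => |∑ k ∈ Finset.range n, c k * x k j + g j|) ∧
      ∑' j, |∑ k ∈ Finset.range n, c k * x k j + g j|
        ≤ ∑ k ∈ Finset.range n, c k * ∑' j, |x k j| + ∑' j, |g j| := by
  have hbound : HasSum (fun j => ∑ k ∈ Finset.range n, c k * |x k j| + |g j|)
      (∑ k ∈ Finset.range n, c k * ∑' j, |x k j| + ∑' j, |g j|) :=
    (hasSum_sum fun k hk => ((hx k (Finset.mem_range.1 hk)).hasSum.mul_left (c k))).add
      hg.hasSum
  have hle : ∀ j, |∑ k ∈ Finset.range n, c k * x k j + g j|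
      ≤ ∑ k ∈ Finset.range n, c k * |x k j| + |g j| := by
    intro j
    refine (abs_add_le _ _).trans (add_le_add_left ((Finset.abs_sum_le_sum_abs _ _).trans_eq
      (Finset.sum_congr rfl fun k hk => ?_)) _)
    rw [abs_mul, abs_of_nonneg (hc k (Finset.mem_range.1 hk))]
  have hsum := hbound.summable.of_nonneg_of_le (fun j => abs_nonneg _) hle
  exact ⟨hsum, hasSum_le hle hsum.hasSum hbound⟩

lemma SolvesExplicitScheme.sub_eq_upwindStep {α δ : ℝ} {fp fm : ℝ → ℝ} {U V : ℕ → ℤ → ℝ}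
    (hU : SolvesExplicitScheme α δ fp fm U) (hV : SolvesExplicitScheme α δ fp fm V) {n : ℕ}
    {A B : ℤ → ℝ} (hA : ∀ j, fp (U n j) - fp (V n j) = A j * (U n j - V n j))
    (hB : ∀ j, fm (U n j) - fm (V n j) = B j * (U n j - V n j)) (j : ℤ) :
    U (n + 1) j - V (n + 1) j
      = ∑ k ∈ Finset.range n, caputoCoeff α n k * (U k j - V k j)
        + upwindStep (caputoCoeff α n n) (fun i => δ * A i) (fun i => δ * B i)
          (fun i => U n i - V n i) j := by
  simp only [hU n j, hV n j, upwindStep, Finset.sum_range_succ, mul_sub, Finset.sum_sub_distrib]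
  linear_combination -δ * hA j + δ * hA (j - 1) - δ * hB (j + 1) + δ * hB j

/-- one-step `ℓ¹` estimate for the explicit upwind scheme under the CFL
condition: `Σ_j |U^{n+1}_j - V^{n+1}_j| ≤ Σ_{k=0}^n c^{n+1}_k Σ_j |U^k_j - V^k_j|`. -/
theorem explicit_upwind_l1_step (α τ h : ℝ) (hα : α ∈ Set.Ioo (0 : ℝ) 1)
    (hτ : 0 < τ) (hh : 0 < h) (δ : ℝ) (hδ : δ = τ ^ α / (h * Real.Gamma (2 - α)))
    (fp fm : ℝ → ℝ) (hfp : Differentiable ℝ fp) (hfm : Differentiable ℝ fm)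
    (hfp' : ∀ x, 0 ≤ deriv fp x) (hfm' : ∀ x, deriv fm x ≤ 0)
    (U V : ℕ → ℤ → ℝ)
    (hU : SolvesExplicitScheme α δ fp fm U) (hV : SolvesExplicitScheme α δ fp fm V)
    (Lp Lm : ℝ) (hcfl : CFLCondition α δ Lp Lm fp fm)
    (n : ℕ) (hsum : ∀ k ≤ n, Summable (fun j : ℤ => |U k j - V k j|)) :
    Summable (fun j : ℤ => |U (n + 1) j - V (n + 1) j|) ∧
    ∑' j : ℤ, |U (n + 1) j - V (n + 1) j|
      ≤ ∑ k ∈ Finset.range (n + 1), caputoCoeff α n k * ∑' j : ℤ, |U k j - V k j| := by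
  obtain ⟨hα₀, hα₁⟩ := hα
  obtain ⟨-, -, hfp_le, hfm_ge, hCFL⟩ := hcfl
  have hδ₀ : 0 ≤ δ := hδ ▸ div_nonneg (Real.rpow_pos_of_pos hτ α).le
    (mul_pos hh (Real.Gamma_pos_of_pos (by linarith))).le
  choose A hA hAeq using fun j => exists_mem_Icc_sub_eq_mul_sub hfp hfp' hfp_le (U n j) (V n j)
  choose B hB hBeq using fun j => exists_mem_Icc_sub_eq_mul_sub hfm hfm_ge hfm' (U n j) (V n j)
  have hAB : ∀ j, δ * A j - δ * B j ≤ caputoCoeff α n n := fun j =>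
    calc δ * A j - δ * B j = δ * (A j - B j) := by ring
      _ ≤ δ * (Lp + Lm) := by gcongr; linarith [(hA j).2, (hB j).1]
      _ ≤ caputoCoeff α n n := hCFL.trans (two_sub_two_rpow_le_caputoCoeff_self hα₁ n)
  obtain ⟨hg, hg_le⟩ := summable_abs_upwindStep_and_tsum_le
    (fun j => mul_nonneg hδ₀ (hA j).1) (fun j => mul_nonpos_of_nonneg_of_nonpos hδ₀ (hB j).2)
    hAB (hsum n le_rfl)
  simp only [hU.sub_eq_upwindStep hV hAeq hBeq]
  obtain ⟨hs, hle⟩ := summable_abs_sum_add_and_tsum_le (x := fun k j => U k j - V k j)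
    (fun k hk => caputoCoeff_nonneg hα₀.le hα₁.le hk.le) (fun k hk => hsum k hk.le) hg
  refine ⟨hs, hle.trans ?_⟩
  rw [Finset.sum_range_succ]
  gcongr
end
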